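/- arXiv:1106.5591 — 9 statements merged into one kernel-verified Lean document; each statement's English description precedes it below -/
import Mathlib

section
/- For positive integers k < n, the k-tuple total restrained domination number of the complete graph K_n equals n if n ≤ 2k+1, and equals k+1 if n ≥ 2k+2. -/
open SimpleGraph

/-- `S` is a `k`-tuple total restrained dominating set of `G`: every vertex has at
least `k` neighbors in `S`, and every vertex outside `S` has at least `k` neighbors
outside `S`. -/
def IsKTRDS {V : Type*} (G : SimpleGraph V) (k : ℕ) (S : Set V) : Prop :=
  (∀ v : V, k ≤ (S ∩ G.neighborSet v).ncard) ∧
  (∀ v : V, v ∉ S → k ≤ (Sᶜ ∩ G.neighborSet v).ncard)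

/-- `S` is a `k`-tuple total dominating set of `G`. -/
def IsKTDS {V : Type*} (G : SimpleGraph V) (k : ℕ) (S : Set V) : Prop :=
  ∀ v : V, k ≤ (S ∩ G.neighborSet v).ncard

/-- The `k`-tuple total restrained domination number of `G`. -/
noncomputable def ktrdNum {V : Type*} (G : SimpleGraph V) (k : ℕ) : ℕ :=
  sInf {m | ∃ S : Set V, IsKTRDS G k S ∧ S.ncard = m}

/-- The `k`-tuple total domination number of `G`. -/
noncomputable def ktNum {V : Type*} (G : SimpleGraph V) (k : ℕ) : ℕ :=
  sInf {m | ∃ S : Set V, IsKTDS G k S ∧ S.ncard = m}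

/-- The `k`-tuple total restrained domatic number of `G`. -/
noncomputable def ktrdDomatic {V : Type*} (G : SimpleGraph V) (k : ℕ) : ℕ :=
  sSup {d | ∃ f : Fin d → Set V, (∀ i, IsKTRDS G k (f i)) ∧ ∀ v : V, ∃! i, v ∈ f i}

/-- The `k`-tuple total domatic number of `G`. -/
noncomputable def ktDomatic {V : Type*} (G : SimpleGraph V) (k : ℕ) : ℕ :=
  sSup {d | ∃ f : Fin d → Set V, (∀ i, IsKTDS G k (f i)) ∧ ∀ v : V, ∃! i, v ∈ f i}

/-!
In `K_n` a vertex sees every vertex but itself, so `S` is a `k`-tuple total restrained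
dominating set exactly when `|S| ≥ k + 1` and, unless `S` is everything, `|Sᶜ| ≥ k + 1`.
For `n ≤ 2k + 1` these two bounds cannot both hold, which forces `S = V`; for
`n ≥ 2k + 2` any `k + 1` vertices work.
-/

lemma IsKTRDS.ktrdNum_eq_ncard {V : Type*} {G : SimpleGraph V} {k : ℕ} {S : Set V}
    (hS : IsKTRDS G k S) (hmin : ∀ T, IsKTRDS G k T → S.ncard ≤ T.ncard) :
    ktrdNum G k = S.ncard :=
  le_antisymm (Nat.sInf_le ⟨S, hS, rfl⟩) <|
    le_csInf ⟨_, S, hS, rfl⟩ fun _ ⟨T, hT, hTm⟩ => hTm ▸ hmin T hT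

section CompleteGraph

variable {V : Type*} {k : ℕ} {S : Set V}

lemma inter_neighborSet_top (S : Set V) (v : V) :
    S ∩ (⊤ : SimpleGraph V).neighborSet v = S \ {v} := by
  ext w
  simp [ne_comm]

lemma isKTRDS_top_iff [Nonempty V] (hk : 1 ≤ k) :
    IsKTRDS (⊤ : SimpleGraph V) k S ↔ k + 1 ≤ S.ncard ∧ (Sᶜ.Nonempty → k + 1 ≤ Sᶜ.ncard) := by
  simp only [IsKTRDS, inter_neighborSet_top]
  constructor
  · rintro ⟨hdom, hres⟩
    obtain ⟨v, hv⟩ : S.Nonempty := by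
      refine Set.nonempty_of_ncard_ne_zero fun h => ?_
      have := (hdom (Classical.arbitrary V)).trans (Set.ncard_sdiff_singleton_le S _)
      omega
    refine ⟨?_, fun ⟨w, hw⟩ => ?_⟩
    · have := hdom v
      rw [Set.ncard_sdiff_singleton_of_mem hv] at this
      omega
    · have := hres w hw
      rw [Set.ncard_sdiff_singleton_of_mem hw] at this
      omega
  · rintro ⟨hS, hSc⟩
    refine ⟨fun v => ?_, fun v hv => ?_⟩
    · have := Set.pred_ncard_le_ncard_sdiff_singleton S v
      omega
    · have := Set.pred_ncard_le_ncard_sdiff_singleton Sᶜ v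
      have := hSc ⟨v, hv⟩
      omega

theorem ktrdNum_top [Finite V] (hk : 1 ≤ k) (hkV : k < Nat.card V) :
    ktrdNum (⊤ : SimpleGraph V) k = if Nat.card V ≤ 2 * k + 1 then Nat.card V else k + 1 := by
  have : Nonempty V := (Nat.card_pos_iff.mp (by omega)).1
  split_ifs with hV
  · have huniv : IsKTRDS (⊤ : SimpleGraph V) k Set.univ := by
      rw [isKTRDS_top_iff hk, Set.ncard_univ]
      simpa using hkV
    refine (huniv.ktrdNum_eq_ncard fun T hT => ?_).trans (Set.ncard_univ V)
    rw [isKTRDS_top_iff hk] at hT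
    rw [Set.ncard_univ]
    have hsum := Set.ncard_add_ncard_compl T
    rcases Tᶜ.eq_empty_or_nonempty with hTc | hTc
    · rw [hTc, Set.ncard_empty] at hsum
      omega
    · have := hT.2 hTc
      omega
  · obtain ⟨S, -, hSk⟩ := Set.exists_subset_card_eq (s := (Set.univ : Set V)) (n := k + 1)
      (by rw [Set.ncard_univ]; omega)
    have hS : IsKTRDS (⊤ : SimpleGraph V) k S := by
      have := Set.ncard_add_ncard_compl S
      rw [isKTRDS_top_iff hk]
      omega
    rw [hS.ktrdNum_eq_ncard, hSk]
    exact fun T hT => hSk ▸ ((isKTRDS_top_iff hk).mp hT).1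

end CompleteGraph

theorem stmt_0 (k n : ℕ) (hk : 1 ≤ k) (hkn : k < n) :
    ktrdNum (⊤ : SimpleGraph (Fin n)) k = if n ≤ 2 * k + 1 then n else k + 1 := by
  simpa using ktrdNum_top (V := Fin n) hk (by simpa using hkn)
end

section
/- For integers k < n with k ≥ 1, the k-tuple total domatic number of the complete graph K_n equals ⌊n/(k+1)⌋. -/
open SimpleGraph

lemma top_nbr {V : Type*} [DecidableEq V] (v : V) :
    (⊤ : SimpleGraph V).neighborSet v = {v}ᶜ := by
  ext w; simp [SimpleGraph.neighborSet, eq_comm]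

lemma ktds_top_iff {n k : ℕ} (hk : 1 ≤ k) (hn : 0 < n) (S : Set (Fin n)) :
    IsKTDS (⊤ : SimpleGraph (Fin n)) k S ↔ k + 1 ≤ S.ncard := by
  constructor
  · intro h
    have h1 := h ⟨0, hn⟩
    have hS : S.Nonempty := by
      by_contra hc
      rw [Set.not_nonempty_iff_eq_empty] at hc
      simp [hc] at h1; omega
    obtain ⟨v, hv⟩ := hS
    have h2 := h v
    rw [top_nbr, ← Set.diff_eq] at h2
    have h3 := Set.ncard_diff_singleton_add_one hv (Set.toFinite S)
    omega
  · intro h v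
    rw [top_nbr, ← Set.diff_eq]
    by_cases hv : v ∈ S
    · have h3 := Set.ncard_diff_singleton_add_one hv (Set.toFinite S)
      omega
    · rw [Set.diff_singleton_eq_self hv]; omega

lemma ub {k n : ℕ} (hk : 1 ≤ k) (hkn : k < n) :
    ∀ b ∈ {d | ∃ f : Fin d → Set (Fin n),
      (∀ i, IsKTDS (⊤ : SimpleGraph (Fin n)) k (f i)) ∧ ∀ v, ∃! i, v ∈ f i},
      b ≤ n / (k + 1) := by
  rintro b ⟨f, hf, hcov⟩
  classical
  set F : Fin b → Finset (Fin n) := fun i => (f i).toFinset with hF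
  have hcard : ∀ i, k + 1 ≤ (F i).card := by
    intro i
    rw [hF, ← Set.ncard_eq_toFinset_card']
    exact (ktds_top_iff hk (by omega) _).mp (hf i)
  have hdisj : ∀ i ∈ (Finset.univ : Finset (Fin b)), ∀ j ∈ Finset.univ, i ≠ j →
      Disjoint (F i) (F j) := by
    intro i _ j _ hij
    rw [Finset.disjoint_left]
    intro v hvi hvj
    obtain ⟨w, _, huniq⟩ := hcov v
    simp only [hF, Set.mem_toFinset] at hvi hvj
    exact hij ((huniq i hvi).trans (huniq j hvj).symm)
  have hsum : ∑ i, (F i).card = (Finset.univ.biUnion F).card := (Finset.card_biUnion hdisj).symm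
  have h1 : b * (k + 1) ≤ ∑ i : Fin b, (F i).card := by
    calc b * (k + 1) = ∑ _i : Fin b, (k + 1) := by simp [Finset.sum_const, mul_comm]
    _ ≤ ∑ i, (F i).card := Finset.sum_le_sum fun i _ => hcard i
  have h2 : (Finset.univ.biUnion F).card ≤ n := by
    simpa using Finset.card_le_univ (Finset.univ.biUnion F)
  rw [Nat.le_div_iff_mul_le (by omega)]
  omega

lemma mem_set {k n : ℕ} (hk : 1 ≤ k) (hkn : k < n) :
    n / (k + 1) ∈ {d | ∃ f : Fin d → Set (Fin n),
      (∀ i, IsKTDS (⊤ : SimpleGraph (Fin n)) k (f i)) ∧ ∀ v, ∃! i, v ∈ f i} := by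
  set d := n / (k + 1) with hd
  have hd1 : 1 ≤ d := (Nat.one_le_div_iff (by omega)).mpr (by omega)
  have hdn : d * (k + 1) ≤ n := Nat.div_mul_le_self n (k + 1)
  refine ⟨fun i => {x : Fin n | min (x.val / (k + 1)) (d - 1) = i.val}, ?_, ?_⟩
  · intro i
    rw [ktds_top_iff hk (by omega)]
    set g : Fin (k + 1) → Fin n := fun j =>
      ⟨i.val * (k + 1) + j.val, by
        have hi : i.val ≤ d - 1 := by omega
        have : i.val * (k + 1) + j.val < d * (k + 1) := by
          have : i.val * (k + 1) ≤ (d - 1) * (k + 1) := Nat.mul_le_mul_right _ hi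
          have h4 : (d - 1) * (k + 1) + (k + 1) = d * (k + 1) := by
            obtain ⟨d', hd'⟩ : ∃ d', d = d' + 1 := ⟨d - 1, by omega⟩
            rw [hd', Nat.add_sub_cancel]; ring
          omega
        omega⟩ with hg
    have hginj : Function.Injective g := by
      intro a b hab
      rw [hg] at hab
      simp only [Fin.mk.injEq] at hab
      exact Fin.ext (by omega)
    have hsub : g '' Set.univ ⊆ {x : Fin n | min (x.val / (k + 1)) (d - 1) = i.val} := by
      rintro x ⟨j, -, rfl⟩
      simp only [Set.mem_setOf_eq, hg]
      have hdiv : (i.val * (k + 1) + j.val) / (k + 1) = i.val := by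
        rw [mul_comm, Nat.mul_add_div (by omega)]
        simp [Nat.div_eq_of_lt j.isLt]
      rw [hdiv]
      omega
    calc k + 1 = (g '' Set.univ).ncard := by
          rw [Set.ncard_image_of_injective _ hginj, Set.ncard_univ, Nat.card_eq_fintype_card,
            Fintype.card_fin]
    _ ≤ _ := Set.ncard_le_ncard hsub (Set.toFinite _)
  · intro v
    refine ⟨⟨min (v.val / (k + 1)) (d - 1), by omega⟩, rfl, ?_⟩
    intro i hi
    exact Fin.ext hi.symm

theorem stmt_4 (k n : ℕ) (hk : 1 ≤ k) (hkn : k < n) :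
    ktDomatic (⊤ : SimpleGraph (Fin n)) k = n / (k + 1) := by
  refine le_antisymm (csSup_le ⟨_, mem_set hk hkn⟩ (ub hk hkn))
    (le_csSup ⟨n / (k + 1), ub hk hkn⟩ (mem_set hk hkn))
end

section
/- Let n ≥ k+3 ≥ 4. The k-tuple total restrained domination number of the complement of the cycle C_n equals n if n ≤ 2k+2, equals k+2 if 2k+3 ≤ n ≤ 3k+2, and equals k+1 if n ≥ 3k+3. -/
open SimpleGraph

/-! In the complement of `C_n` a vertex `v` is adjacent to everything outside its closed
cycle-neighbourhood `N[v] = {v - 1, v, v + 1}`, so a set `A` has at least `k` elements adjacent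
to `v` iff `k + |A ∩ N[v]| ≤ |A|`.

If some `v` lies outside `S`, its `n - 3` neighbours must supply `k` vertices on each side, so
`S` is everything once `n ≤ 2k + 2`. Otherwise `|S| ≥ k + 1`, and a set of size exactly `k + 1`
meets every `N[v]` at most once; since every vertex lies in three of the sets `N[v]`, double
counting gives `3(k + 1) ≤ n`. The bounds are attained by `{0, 2, …, 2k + 2}` and
`{0, 3, …, 3k}`. -/

namespace SimpleGraph

variable {V : Type*}

lemma compl_neighborSet_eq_compl_insert (H : SimpleGraph V) (v : V) :
    Hᶜ.neighborSet v = (insert v (H.neighborSet v))ᶜ := by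
  rw [neighborSet_compl, Set.sdiff_eq, ← Set.compl_union, Set.union_comm, Set.singleton_union]

lemma le_ncard_inter_compl_neighborSet_iff [Finite V] (H : SimpleGraph V) (A : Set V) (k : ℕ)
    (v : V) :
    k ≤ (A ∩ Hᶜ.neighborSet v).ncard ↔ k + (A ∩ insert v (H.neighborSet v)).ncard ≤ A.ncard := by
  rw [compl_neighborSet_eq_compl_insert, ← Set.sdiff_eq,
    ← Set.ncard_inter_add_ncard_sdiff_eq_ncard A (insert v (H.neighborSet v))]
  omega

lemma ncard_insert_neighborSet [Finite V] (H : SimpleGraph V) (v : V) :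
    (insert v (H.neighborSet v)).ncard = (H.neighborSet v).ncard + 1 :=
  Set.ncard_insert_of_notMem H.notMem_neighborSet_self

lemma ncard_compl_neighborSet [Finite V] (H : SimpleGraph V) (v : V) :
    (Hᶜ.neighborSet v).ncard = Nat.card V - ((H.neighborSet v).ncard + 1) := by
  rw [compl_neighborSet_eq_compl_insert, Set.ncard_compl, ncard_insert_neighborSet]

end SimpleGraph

section Domination

variable {V : Type*} {G : SimpleGraph V} {k : ℕ} {S : Set V}

lemma le_ncard_compl_inter_of_add_ncard_le [Finite V] {N : Set V} (h : k + S.ncard ≤ N.ncard) :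
    k ≤ (Sᶜ ∩ N).ncard := by
  have hsplit := Set.ncard_inter_add_ncard_sdiff_eq_ncard N S
  have := Set.ncard_le_ncard (Set.inter_subset_right : N ∩ S ⊆ S)
  rw [Set.sdiff_eq, Set.inter_comm N Sᶜ] at hsplit
  omega

lemma IsKTRDS.isKTDS (h : IsKTRDS G k S) : IsKTDS G k S :=
  h.1

lemma ktrdNum_eq {m : ℕ} (hS : IsKTRDS G k S) (hcard : S.ncard = m)
    (hmin : ∀ T, IsKTRDS G k T → m ≤ T.ncard) : ktrdNum G k = m :=
  le_antisymm (Nat.sInf_le ⟨S, hS, hcard⟩)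
    (le_csInf ⟨m, S, hS, hcard⟩ fun _ ⟨T, hT, hT'⟩ => hT' ▸ hmin T hT)

lemma isKTRDS_univ (h : ∀ v, k ≤ (G.neighborSet v).ncard) : IsKTRDS G k Set.univ :=
  ⟨fun v => by rw [Set.univ_inter]; exact h v, fun v hv => absurd (Set.mem_univ v) hv⟩

lemma IsKTRDS.two_mul_le_ncard_neighborSet [Finite V] (h : IsKTRDS G k S) {v : V}
    (hv : v ∉ S) : 2 * k ≤ (G.neighborSet v).ncard := by
  have hsplit := Set.ncard_inter_add_ncard_sdiff_eq_ncard (G.neighborSet v) S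
  rw [Set.inter_comm, Set.sdiff_eq, Set.inter_comm (G.neighborSet v)] at hsplit
  have := h.1 v
  have := h.2 v hv
  omega

lemma IsKTRDS.eq_univ [Finite V] (h : IsKTRDS G k S)
    (hdeg : ∀ v, (G.neighborSet v).ncard < 2 * k) : S = Set.univ :=
  Set.eq_univ_of_forall fun v =>
    by_contra fun hv => (hdeg v).not_ge (h.two_mul_le_ncard_neighborSet hv)

lemma IsKTDS.add_one_le_ncard [Finite V] [Nonempty V] (h : IsKTDS G k S) (hk : 1 ≤ k) :
    k + 1 ≤ S.ncard := by
  obtain ⟨s, hs, -⟩ : (S ∩ G.neighborSet (Classical.arbitrary V)).Nonempty :=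
    Set.nonempty_of_ncard_ne_zero (by have := h (Classical.arbitrary V); omega)
  have hsub : S ∩ G.neighborSet s ⊆ S \ {s} := fun x ⟨hxS, hx⟩ =>
    ⟨hxS, fun hxs => G.notMem_neighborSet_self (hxs ▸ hx)⟩
  have := (h s).trans (Set.ncard_le_ncard hsub)
  rw [Set.ncard_sdiff_singleton_of_mem hs] at this
  have := (Set.ncard_pos (Set.toFinite S)).mpr ⟨s, hs⟩
  omega

lemma SimpleGraph.ncard_mul_le_card_of_ncard_inter_insert_neighborSet_le_one [Finite V]
    (H : SimpleGraph V) {d : ℕ} (hd : ∀ v, d ≤ (H.neighborSet v).ncard)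
    (hS : ∀ v, (S ∩ insert v (H.neighborSet v)).ncard ≤ 1) :
    S.ncard * (d + 1) ≤ Nat.card V := by
  classical
  have := Fintype.ofFinite V
  have hcount := Finset.card_mul_le_card_mul (fun a b => b ∈ insert a (H.neighborSet a))
    (s := S.toFinset) (t := Finset.univ) (m := d + 1) (n := 1) ?_ ?_
  · simpa [Set.ncard_eq_toFinset_card'] using hcount
  · intro a _
    have hset : (Finset.univ.bipartiteAbove (fun a b => b ∈ insert a (H.neighborSet a)) a :
        Set V) = insert a (H.neighborSet a) := by
      ext; simp
    rw [← Set.ncard_coe_finset, hset, H.ncard_insert_neighborSet]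
    exact Nat.succ_le_succ (hd a)
  · intro b _
    have hset : (S.toFinset.bipartiteBelow (fun a b => b ∈ insert a (H.neighborSet a)) b :
        Set V) = S ∩ insert b (H.neighborSet b) := by
      ext; simp [eq_comm, H.adj_comm, and_or_left]
    rw [← Set.ncard_coe_finset, hset]
    exact hS b

lemma IsKTDS.add_two_le_ncard_of_card_lt [Finite V] [Nonempty V] {H : SimpleGraph V} {d : ℕ}
    (h : IsKTDS Hᶜ k S) (hk : 1 ≤ k) (hd : ∀ v, d ≤ (H.neighborSet v).ncard)
    (hcard : Nat.card V < (k + 1) * (d + 1)) : k + 2 ≤ S.ncard := by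
  have hlow := h.add_one_le_ncard hk
  by_contra! hlt
  have hS : S.ncard = k + 1 := by omega
  have hpack : ∀ v, (S ∩ insert v (H.neighborSet v)).ncard ≤ 1 := fun v => by
    have := (H.le_ncard_inter_compl_neighborSet_iff S k v).mp (h v)
    omega
  have := H.ncard_mul_le_card_of_ncard_inter_insert_neighborSet_le_one hd hpack
  rw [hS] at this
  omega

end Domination

lemma Fin.val_sub_eq_one_iff {n : ℕ} (hn : 2 ≤ n) {a b : Fin n} :
    (a - b).val = 1 ↔ a.val = b.val + 1 ∨ (a.val = 0 ∧ b.val + 1 = n) := by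
  rcases le_or_gt b a with hba | hab
  · rw [Fin.coe_sub_iff_le.mpr hba]
    omega
  · rw [Fin.coe_sub_iff_lt.mpr hab]
    omega

namespace SimpleGraph

lemma ncard_cycleGraph_neighborSet {n : ℕ} (hn : 3 ≤ n) (v : Fin n) :
    ((cycleGraph n).neighborSet v).ncard = 2 := by
  obtain ⟨m, rfl⟩ : ∃ m, n = m + 3 := ⟨n - 3, by omega⟩
  rw [← Nat.card_coe_set_eq, Nat.card_eq_fintype_card, card_neighborSet_eq_degree,
    cycleGraph_degree_three_le]

lemma mem_insert_cycleGraph_neighborSet_iff {n : ℕ} (hn : 2 ≤ n) {v x : Fin n} :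
    x ∈ insert v ((cycleGraph n).neighborSet v) ↔
      x.val = v.val ∨ x.val + 1 = v.val ∨ v.val + 1 = x.val ∨
        (x.val = 0 ∧ v.val + 1 = n) ∨ (v.val = 0 ∧ x.val + 1 = n) := by
  rw [Set.mem_insert_iff, mem_neighborSet, cycleGraph_adj', Fin.val_sub_eq_one_iff hn,
    Fin.val_sub_eq_one_iff hn, Fin.ext_iff]
  omega

end SimpleGraph

open SimpleGraph

def multiplesBelow (n d m : ℕ) : Set (Fin n) := {x | x.val % d = 0 ∧ x.val < d * m}

lemma ncard_multiplesBelow {n d m : ℕ} (hd : 0 < d) (h : d * (m - 1) < n) :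
    (multiplesBelow n d m).ncard = m := by
  have hlt : ∀ i < m, d * i < n := fun i hi =>
    lt_of_le_of_lt (Nat.mul_le_mul_left d (by omega)) h
  have hrange : multiplesBelow n d m =
      Set.range (fun i : Fin m => (⟨d * i, hlt i i.isLt⟩ : Fin n)) := by
    ext x
    constructor
    · rintro ⟨hmod, hx⟩
      exact ⟨⟨x.val / d, (Nat.div_lt_iff_lt_mul hd).mpr (by rwa [mul_comm])⟩,
        Fin.ext (Nat.mul_div_cancel' (Nat.dvd_of_mod_eq_zero hmod))⟩
    · rintro ⟨i, rfl⟩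
      exact ⟨Nat.mul_mod_right d i, Nat.mul_lt_mul_of_pos_left i.isLt hd⟩
  rw [hrange, Set.ncard_range_of_injective, Nat.card_eq_fintype_card, Fintype.card_fin]
  intro i j hij
  exact Fin.ext (Nat.eq_of_mul_eq_mul_left hd (congrArg Fin.val hij))

lemma isKTRDS_multiplesBelow_three {n k : ℕ} (hk : 1 ≤ k) (hn : 3 * k + 3 ≤ n) :
    IsKTRDS (cycleGraph n)ᶜ k (multiplesBelow n 3 (k + 1)) := by
  have hS := ncard_multiplesBelow (n := n) (d := 3) (m := k + 1) (by norm_num) (by omega)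
  refine ⟨fun v => ?_, fun v _ => ?_⟩
  · rw [le_ncard_inter_compl_neighborSet_iff, hS]
    suffices (multiplesBelow n 3 (k + 1) ∩ insert v ((cycleGraph n).neighborSet v)).ncard ≤ 1 by
      omega
    rw [Set.ncard_le_one_iff]
    rintro a b ⟨⟨ha3, ha⟩, hav⟩ ⟨⟨hb3, hb⟩, hbv⟩
    rw [mem_insert_cycleGraph_neighborSet_iff (by omega)] at hav hbv
    exact Fin.ext (by omega)
  · apply le_ncard_compl_inter_of_add_ncard_le
    rw [hS, ncard_compl_neighborSet, ncard_cycleGraph_neighborSet (by omega), Nat.card_fin]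
    omega

lemma isKTRDS_multiplesBelow_two {n k : ℕ} (hn : 2 * k + 3 ≤ n) :
    IsKTRDS (cycleGraph n)ᶜ k (multiplesBelow n 2 (k + 2)) := by
  have hS := ncard_multiplesBelow (n := n) (d := 2) (m := k + 2) (by norm_num) (by omega)
  refine ⟨fun v => ?_, fun v hv => ?_⟩
  · rw [le_ncard_inter_compl_neighborSet_iff, hS]
    suffices (multiplesBelow n 2 (k + 2) ∩ insert v ((cycleGraph n).neighborSet v)).ncard ≤ 2 by
      omega
    by_contra! h
    obtain ⟨a, b, c, ⟨⟨ha2, ha⟩, hav⟩, ⟨⟨hb2, hb⟩, hbv⟩, ⟨⟨hc2, hc⟩, hcv⟩, hab, hac, hbc⟩ :=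
      (Set.two_lt_ncard_iff (Set.toFinite _)).mp h
    rw [mem_insert_cycleGraph_neighborSet_iff (by omega)] at hav hbv hcv
    rw [Ne, Fin.ext_iff] at hab hac hbc
    omega
  · by_cases hfar : 2 * k + 5 ≤ n
    · apply le_ncard_compl_inter_of_add_ncard_le
      rw [hS, ncard_compl_neighborSet, ncard_cycleGraph_neighborSet (by omega), Nat.card_fin]
      omega
    · rw [le_ncard_inter_compl_neighborSet_iff, Set.ncard_compl, hS, Nat.card_fin]
      suffices ((multiplesBelow n 2 (k + 2))ᶜ ∩ insert v ((cycleGraph n).neighborSet v)).ncard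
          ≤ 1 by omega
      rw [Set.ncard_le_one_iff]
      rintro a b ⟨ha, hav⟩ ⟨hb, hbv⟩
      simp only [multiplesBelow, Set.mem_compl_iff, Set.mem_ofPred_eq] at ha hb hv
      rw [mem_insert_cycleGraph_neighborSet_iff (by omega)] at hav hbv
      exact Fin.ext (by omega)

theorem stmt_5 (k n : ℕ) (hk : 1 ≤ k) (hn : k + 3 ≤ n) :
    ktrdNum (SimpleGraph.cycleGraph n)ᶜ k =
      if n ≤ 2 * k + 2 then n else if n ≤ 3 * k + 2 then k + 2 else k + 1 := by
  have hdeg : ∀ v : Fin n, ((cycleGraph n).neighborSet v).ncard = 2 :=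
    ncard_cycleGraph_neighborSet (by omega)
  have hdegc : ∀ v : Fin n, ((cycleGraph n)ᶜ.neighborSet v).ncard = n - 3 := fun v => by
    rw [ncard_compl_neighborSet, hdeg, Nat.card_fin]
  have : Nonempty (Fin n) := ⟨⟨0, by omega⟩⟩
  split_ifs with hsmall hmid
  · refine ktrdNum_eq (isKTRDS_univ fun v => by rw [hdegc]; omega) (by simp) fun T hT => ?_
    rw [hT.eq_univ fun v => by rw [hdegc]; omega, Set.ncard_univ, Nat.card_fin]
  · exact ktrdNum_eq (isKTRDS_multiplesBelow_two (by omega))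
      (ncard_multiplesBelow (by norm_num) (by omega)) fun T hT =>
      hT.isKTDS.add_two_le_ncard_of_card_lt hk (fun v => (hdeg v).ge)
        (by rw [Nat.card_fin]; omega)
  · exact ktrdNum_eq (isKTRDS_multiplesBelow_three hk (by omega))
      (ncard_multiplesBelow (by norm_num) (by omega)) fun T hT => hT.isKTDS.add_one_le_ncard hk
end

section
/- Let n ≥ k+3 ≥ 5 with k ≥ 2. The k-tuple total restrained domination number of the complement of the path P_n equals n if n ≤ 2k+2, equals k+2 if 2k+3 ≤ n ≤ 3k, and equals k+1 if n ≥ 3k+1. -/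
open SimpleGraph

/-! ### Auxiliary machinery -/

/-- distance-one closed ball in the path. -/
def pball (n : ℕ) (v : Fin n) : Set (Fin n) :=
  {w | w.val ≤ v.val + 1 ∧ v.val ≤ w.val + 1}

lemma mem_pball {n : ℕ} {v w : Fin n} :
    w ∈ pball n v ↔ w.val ≤ v.val + 1 ∧ v.val ≤ w.val + 1 := Iff.rfl

lemma self_mem_pball {n : ℕ} (v : Fin n) : v ∈ pball n v := by
  simp [mem_pball]

lemma neighborSet_complPath (n : ℕ) (v : Fin n) :
    (SimpleGraph.pathGraph n)ᶜ.neighborSet v = (pball n v)ᶜ := by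
  ext w
  simp only [mem_neighborSet, compl_adj, pathGraph_adj, Set.mem_compl_iff, mem_pball,
    Ne, Fin.ext_iff]
  omega

lemma inter_nbs {n : ℕ} (S : Set (Fin n)) (v : Fin n) :
    S ∩ (SimpleGraph.pathGraph n)ᶜ.neighborSet v = S \ pball n v := by
  rw [neighborSet_complPath, Set.diff_eq]

lemma pball_ncard_le (n : ℕ) (v : Fin n) : (pball n v).ncard ≤ 3 := by
  have hb : (v.val - 1) < n := lt_of_le_of_lt (Nat.sub_le _ _) v.isLt
  by_cases h : v.val + 1 < n
  · have : pball n v ⊆ insert v (insert ⟨v.val + 1, h⟩ {(⟨v.val - 1, hb⟩ : Fin n)}) := by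
      intro w hw
      simp only [Set.mem_insert_iff, Set.mem_singleton_iff, Fin.ext_iff]
      rcases hw with ⟨h1, h2⟩
      omega
    calc (pball n v).ncard ≤ _ := Set.ncard_le_ncard this (Set.toFinite _)
      _ ≤ _ + 1 := Set.ncard_insert_le _ _
      _ ≤ (_ + 1) + 1 := by gcongr; exact Set.ncard_insert_le _ _
      _ ≤ 3 := by simp
  · have : pball n v ⊆ insert v {(⟨v.val - 1, hb⟩ : Fin n)} := by
      intro w hw
      simp only [Set.mem_insert_iff, Set.mem_singleton_iff, Fin.ext_iff]
      rcases hw with ⟨h1, h2⟩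
      have := w.isLt
      omega
    calc (pball n v).ncard ≤ _ := Set.ncard_le_ncard this (Set.toFinite _)
      _ ≤ _ + 1 := Set.ncard_insert_le _ _
      _ ≤ 3 := by simp

lemma ktrds_iff {n k : ℕ} (S : Set (Fin n)) :
    IsKTRDS (SimpleGraph.pathGraph n)ᶜ k S ↔
      (∀ v, k + (S ∩ pball n v).ncard ≤ S.ncard) ∧
      (∀ v ∉ S, k + (Sᶜ ∩ pball n v).ncard ≤ Sᶜ.ncard) := by
  have key : ∀ (T : Set (Fin n)) (v : Fin n),
      k ≤ (T ∩ (SimpleGraph.pathGraph n)ᶜ.neighborSet v).ncard ↔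
      k + (T ∩ pball n v).ncard ≤ T.ncard := by
    intro T v
    rw [inter_nbs]
    have := Set.ncard_inter_add_ncard_diff_eq_ncard T (pball n v) (Set.toFinite _)
    omega
  unfold IsKTRDS
  constructor
  · rintro ⟨h1, h2⟩
    exact ⟨fun v => (key S v).1 (h1 v), fun v hv => (key Sᶜ v).1 (h2 v hv)⟩
  · rintro ⟨h1, h2⟩
    exact ⟨fun v => (key S v).2 (h1 v), fun v hv => (key Sᶜ v).2 (h2 v hv)⟩

lemma ncard_compl_fin {n : ℕ} (S : Set (Fin n)) : Sᶜ.ncard = n - S.ncard := by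
  have := Set.ncard_add_ncard_compl S (Set.toFinite _) (Set.toFinite _)
  simp [Nat.card_eq_fintype_card] at this
  omega

lemma ncard_split_pball {n : ℕ} (S : Set (Fin n)) (v : Fin n) :
    (S ∩ pball n v).ncard + (Sᶜ ∩ pball n v).ncard = (pball n v).ncard := by
  have h := Set.ncard_inter_add_ncard_diff_eq_ncard (pball n v) S (Set.toFinite _)
  rw [Set.diff_eq] at h
  rw [Set.inter_comm S, Set.inter_comm Sᶜ]
  exact h

lemma ncard_graphSet {n c : ℕ} {f : ℕ → ℕ}
    (hmono : ∀ i j, i < j → j < c → f i < f j) (hlt : ∀ i, i < c → f i < n) :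
    {w : Fin n | ∃ i, i < c ∧ f i = w.val}.ncard = c := by
  have himg : {w : Fin n | ∃ i, i < c ∧ f i = w.val}
      = (fun i : Fin c => (⟨f i.val, hlt i.val i.isLt⟩ : Fin n)) '' Set.univ := by
    ext w
    simp only [Set.mem_setOf_eq, Set.image_univ, Set.mem_range]
    constructor
    · rintro ⟨i, hi, hfi⟩
      exact ⟨⟨i, hi⟩, by simp [Fin.ext_iff, hfi]⟩
    · rintro ⟨i, hi⟩
      exact ⟨i.val, i.isLt, by rw [← hi]⟩
  rw [himg, Set.ncard_image_of_injOn, Set.ncard_univ, Nat.card_eq_fintype_card,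
    Fintype.card_fin]
  intro i _ j _ hij
  simp only [Fin.ext_iff] at hij ⊢
  rcases lt_trichotomy i.val j.val with h | h | h
  · exact absurd hij (Nat.ne_of_lt (hmono _ _ h j.isLt))
  · exact h
  · exact absurd hij.symm (Nat.ne_of_lt (hmono _ _ h i.isLt))

/-- Any valid set has at least `k+1` elements. -/
lemma lower_k1 {n k : ℕ} (hk : 2 ≤ k) (hn : 0 < n) {S : Set (Fin n)}
    (hS : IsKTRDS (SimpleGraph.pathGraph n)ᶜ k S) : k + 1 ≤ S.ncard := by
  rw [ktrds_iff] at hS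
  have hcard := hS.1 ⟨0, hn⟩
  have hne : S.Nonempty := by
    rw [← Set.ncard_pos (Set.toFinite _)]
    omega
  obtain ⟨s, hs⟩ := hne
  have h1 := hS.1 s
  have : 0 < (S ∩ pball n s).ncard := by
    rw [Set.ncard_pos (Set.toFinite _)]
    exact ⟨s, hs, self_mem_pball s⟩
  omega

lemma two_le_ncard_fin {n : ℕ} {T : Set (Fin n)} (a b : Fin n)
    (ha : a ∈ T) (hb : b ∈ T) (hab : a.val ≠ b.val) : 2 ≤ T.ncard :=
  (Set.one_lt_ncard (Set.toFinite _)).2 ⟨a, ha, b, hb, by simp [Fin.ext_iff, hab]⟩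

lemma mk_mem_pball {n a b : ℕ} (ha : a < n) (hb : b < n)
    (h1 : a ≤ b + 1) (h2 : b ≤ a + 1) : (⟨a, ha⟩ : Fin n) ∈ pball n ⟨b, hb⟩ :=
  ⟨h1, h2⟩

lemma case1 {k n : ℕ} (hk : 2 ≤ k) (hn : k + 3 ≤ n) (h2 : n ≤ 2 * k + 2) :
    ktrdNum (SimpleGraph.pathGraph n)ᶜ k = n := by
  have hn0 : 0 < n := by omega
  have huniv : IsKTRDS (SimpleGraph.pathGraph n)ᶜ k (Set.univ : Set (Fin n)) := by
    rw [ktrds_iff]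
    constructor
    · intro v
      have h3 := pball_ncard_le n v
      have : (Set.univ ∩ pball n v).ncard ≤ 3 := by
        rw [Set.univ_inter]; exact h3
      have : (Set.univ : Set (Fin n)).ncard = n := by
        rw [Set.ncard_univ, Nat.card_eq_fintype_card, Fintype.card_fin]
      omega
    · intro v hv
      exact absurd (Set.mem_univ v) hv
  have hmemn : n ∈ {m | ∃ S : Set (Fin n), IsKTRDS (SimpleGraph.pathGraph n)ᶜ k S ∧ S.ncard = m} :=
    ⟨Set.univ, huniv, by rw [Set.ncard_univ, Nat.card_eq_fintype_card, Fintype.card_fin]⟩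
  have hall : ∀ m ∈ {m | ∃ S : Set (Fin n), IsKTRDS (SimpleGraph.pathGraph n)ᶜ k S ∧ S.ncard = m},
      m = n := by
    rintro m ⟨S, hS, rfl⟩
    have hSL := lower_k1 hk hn0 hS
    rw [ktrds_iff] at hS
    have hSuniv : S = Set.univ := by
      by_contra hne
      obtain ⟨v, hv⟩ := (Set.ne_univ_iff_exists_notMem S).1 hne
      have h2' := hS.2 v hv
      have hvball : 0 < (Sᶜ ∩ pball n v).ncard := by
        rw [Set.ncard_pos (Set.toFinite _)]
        exact ⟨v, hv, self_mem_pball v⟩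
      have hcompl := ncard_compl_fin S
      -- forces n = 2k+2 and both sides of size k+1
      have hSc : S.ncard = k + 1 := by omega
      have hScc : Sᶜ.ncard = k + 1 := by omega
      have hne7 : n = 2 * k + 2 := by omega
      have c1 : ∀ w : Fin n, (S ∩ pball n w).ncard ≤ 1 := by
        intro w; have := hS.1 w; omega
      have c2 : ∀ w : Fin n, w ∉ S → (Sᶜ ∩ pball n w).ncard ≤ 1 := by
        intro w hw; have := hS.2 w hw; omega
      have h0n : (0:ℕ) < n := by omega
      have h1n : (1:ℕ) < n := by omega
      have h2n : (2:ℕ) < n := by omega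
      have h3n : (3:ℕ) < n := by omega
      have b01 : (⟨0, h0n⟩ : Fin n) ∈ pball n ⟨1, h1n⟩ := mk_mem_pball _ _ (by omega) (by omega)
      have b11 : (⟨1, h1n⟩ : Fin n) ∈ pball n ⟨1, h1n⟩ := self_mem_pball _
      have b21 : (⟨2, h2n⟩ : Fin n) ∈ pball n ⟨1, h1n⟩ := mk_mem_pball _ _ (by omega) (by omega)
      have b12 : (⟨1, h1n⟩ : Fin n) ∈ pball n ⟨2, h2n⟩ := mk_mem_pball _ _ (by omega) (by omega)
      have b22 : (⟨2, h2n⟩ : Fin n) ∈ pball n ⟨2, h2n⟩ := self_mem_pball _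
      have b32 : (⟨3, h3n⟩ : Fin n) ∈ pball n ⟨2, h2n⟩ := mk_mem_pball _ _ (by omega) (by omega)
      by_cases h1S : (⟨1, h1n⟩ : Fin n) ∈ S
      · have h0S : (⟨0, h0n⟩ : Fin n) ∉ S := by
          intro h0
          exact absurd (two_le_ncard_fin (T := S ∩ pball n ⟨1, h1n⟩) ⟨0,h0n⟩ ⟨1,h1n⟩
            ⟨h0, b01⟩ ⟨h1S, b11⟩ (by simp)) (by have := c1 ⟨1, h1n⟩; omega)
        have h2S : (⟨2, h2n⟩ : Fin n) ∉ S := by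
          intro h2'
          exact absurd (two_le_ncard_fin (T := S ∩ pball n ⟨1, h1n⟩) ⟨1,h1n⟩ ⟨2,h2n⟩
            ⟨h1S, b11⟩ ⟨h2', b21⟩ (by simp)) (by have := c1 ⟨1, h1n⟩; omega)
        have h3S : (⟨3, h3n⟩ : Fin n) ∈ S := by
          by_contra h3
          exact absurd (two_le_ncard_fin (T := Sᶜ ∩ pball n ⟨2, h2n⟩) ⟨2,h2n⟩ ⟨3,h3n⟩
            ⟨h2S, b22⟩ ⟨h3, b32⟩ (by simp)) (by have := c2 ⟨2, h2n⟩ h2S; omega)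
        exact absurd (two_le_ncard_fin (T := S ∩ pball n ⟨2, h2n⟩) ⟨1,h1n⟩ ⟨3,h3n⟩
          ⟨h1S, b12⟩ ⟨h3S, b32⟩ (by simp)) (by have := c1 ⟨2, h2n⟩; omega)
      · have h0S : (⟨0, h0n⟩ : Fin n) ∈ S := by
          by_contra h0
          exact absurd (two_le_ncard_fin (T := Sᶜ ∩ pball n ⟨1, h1n⟩) ⟨0,h0n⟩ ⟨1,h1n⟩
            ⟨h0, b01⟩ ⟨h1S, b11⟩ (by simp)) (by have := c2 ⟨1, h1n⟩ h1S; omega)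
        have h2S : (⟨2, h2n⟩ : Fin n) ∈ S := by
          by_contra h2'
          exact absurd (two_le_ncard_fin (T := Sᶜ ∩ pball n ⟨1, h1n⟩) ⟨1,h1n⟩ ⟨2,h2n⟩
            ⟨h1S, b11⟩ ⟨h2', b21⟩ (by simp)) (by have := c2 ⟨1, h1n⟩ h1S; omega)
        exact absurd (two_le_ncard_fin (T := S ∩ pball n ⟨1, h1n⟩) ⟨0,h0n⟩ ⟨2,h2n⟩
          ⟨h0S, b01⟩ ⟨h2S, b21⟩ (by simp)) (by have := c1 ⟨1, h1n⟩; omega)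
    rw [hSuniv, Set.ncard_univ, Nat.card_eq_fintype_card, Fintype.card_fin]
  unfold ktrdNum
  exact le_antisymm (Nat.sInf_le hmemn) (le_csInf ⟨n, hmemn⟩ fun m hm => (hall m hm).ge)

lemma mem_pball_mk_right {n : ℕ} {w : Fin n} {b : ℕ} (hb : b < n)
    (h1 : w.val ≤ b + 1) (h2 : b ≤ w.val + 1) : w ∈ pball n ⟨b, hb⟩ :=
  ⟨h1, h2⟩

lemma mk_mem_graphSet {n c : ℕ} {f : ℕ → ℕ} {a : ℕ} (ha : a < n) (i : ℕ)
    (hi : i < c) (hfi : f i = a) :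
    (⟨a, ha⟩ : Fin n) ∈ {w : Fin n | ∃ j, j < c ∧ f j = w.val} := ⟨i, hi, hfi⟩

lemma mem_pball_of_val {n : ℕ} {v : Fin n} {a : ℕ} (ha : a < n)
    (h1 : a ≤ v.val + 1) (h2 : v.val ≤ a + 1) : (⟨a, ha⟩ : Fin n) ∈ pball n v :=
  ⟨h1, h2⟩

lemma case3 {k n : ℕ} (hk : 2 ≤ k) (h3 : 3 * k + 1 ≤ n) :
    ktrdNum (SimpleGraph.pathGraph n)ᶜ k = k + 1 := by
  have hn0 : 0 < n := by omega
  set S : Set (Fin n) := {w : Fin n | ∃ i, i < k + 1 ∧ 3 * i = w.val} with hSdef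
  have hcard : S.ncard = k + 1 := by
    apply ncard_graphSet
    · intro i j hij hj; omega
    · intro i hi; omega
  have hvalid : IsKTRDS (SimpleGraph.pathGraph n)ᶜ k S := by
    rw [ktrds_iff]
    constructor
    · intro v
      have hle1 : (S ∩ pball n v).ncard ≤ 1 := by
        rw [Set.ncard_le_one (Set.toFinite _)]
        rintro a ⟨⟨i, hi, hia⟩, ha1, ha2⟩ b ⟨⟨j, hj, hjb⟩, hb1, hb2⟩
        have : i = j := by omega
        apply Fin.ext; omega
      omega
    · intro v hv
      have hsplit := ncard_split_pball S v
      have hball := pball_ncard_le n v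
      have hcompl : Sᶜ.ncard = n - (k + 1) := by rw [ncard_compl_fin, hcard]
      by_cases hbig : 2 * k + 4 ≤ n
      · omega
      · have hk2 : k = 2 := by omega
        have hn7 : n = 7 := by omega
        simp only [hSdef, Set.mem_setOf_eq, not_exists, not_and] at hv
        have e0 := hv 0 (by omega)
        have e1 := hv 1 (by omega)
        have e2 := hv 2 (by omega)
        have hvlt := v.isLt
        have hpos : 0 < (S ∩ pball n v).ncard := by
          rw [Set.ncard_pos (Set.toFinite _)]
          have hval : v.val = 1 ∨ v.val = 2 ∨ v.val = 4 ∨ v.val = 5 := by omega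
          rcases hval with h | h | h | h
          · exact ⟨⟨0, by omega⟩, ⟨0, by omega, by simp⟩,
              mem_pball_of_val _ (by omega) (by omega)⟩
          · exact ⟨⟨3, by omega⟩, ⟨1, by omega, by simp⟩,
              mem_pball_of_val _ (by omega) (by omega)⟩
          · exact ⟨⟨3, by omega⟩, ⟨1, by omega, by simp⟩,
              mem_pball_of_val _ (by omega) (by omega)⟩
          · exact ⟨⟨6, by omega⟩, ⟨2, by omega, by simp⟩,
              mem_pball_of_val _ (by omega) (by omega)⟩
        omega
  have hmem : k + 1 ∈
      {m | ∃ S : Set (Fin n), IsKTRDS (SimpleGraph.pathGraph n)ᶜ k S ∧ S.ncard = m} :=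
    ⟨S, hvalid, hcard⟩
  unfold ktrdNum
  refine le_antisymm (Nat.sInf_le hmem) (le_csInf ⟨_, hmem⟩ ?_)
  rintro m ⟨T, hT, rfl⟩
  exact lower_k1 hk hn0 hT

lemma sparse_contra {k n : ℕ} (hk : 2 ≤ k) (hn : k + 3 ≤ n) (hn3 : n ≤ 3 * k)
    {T : Set (Fin n)} (hT : IsKTRDS (SimpleGraph.pathGraph n)ᶜ k T)
    (hcard : T.ncard = k + 1) : False := by
  rw [ktrds_iff] at hT
  have c1 : ∀ w : Fin n, (T ∩ pball n w).ncard ≤ 1 := by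
    intro w; have := hT.1 w; omega
  have hinj : Set.InjOn (fun w : Fin n => w.val / 3) T := by
    intro a ha b hb hab
    simp only at hab
    by_contra hne
    have hvne : a.val ≠ b.val := fun h => hne (Fin.ext h)
    -- wlog a.val < b.val
    have key : ∀ x y : Fin n, x ∈ T → y ∈ T → x.val < y.val → y.val / 3 = x.val / 3 → False := by
      intro x y hx hy hlt hdiv
      have hd2 : y.val ≤ x.val + 2 := by omega
      by_cases hclose : y.val ≤ x.val + 1
      · have : 2 ≤ (T ∩ pball n x).ncard :=
          two_le_ncard_fin x y ⟨hx, self_mem_pball x⟩ ⟨hy, ⟨hclose, by omega⟩⟩ (by omega)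
        have := c1 x; omega
      · have hmid : x.val + 1 < n := lt_trans (by omega) y.isLt
        have : 2 ≤ (T ∩ pball n ⟨x.val + 1, hmid⟩).ncard :=
          two_le_ncard_fin x y ⟨hx, mem_pball_mk_right hmid (by omega) (by omega)⟩
            ⟨hy, mem_pball_mk_right hmid (by omega) (by omega)⟩ (by omega)
        have := c1 ⟨x.val + 1, hmid⟩; omega
    rcases lt_trichotomy a.val b.val with h | h | h
    · exact key a b ha hb h hab.symm
    · exact hvne h
    · exact key b a hb ha h hab
  have himg : (fun w : Fin n => w.val / 3) '' T ⊆ Set.Iic ((n - 1) / 3) := by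
    rintro x ⟨w, hw, rfl⟩
    simp only [Set.mem_Iic]
    have := w.isLt
    omega
  have hle : ((fun w : Fin n => w.val / 3) '' T).ncard ≤ (Set.Iic ((n - 1) / 3)).ncard :=
    Set.ncard_le_ncard himg (Set.finite_Iic _)
  rw [Set.ncard_image_of_injOn hinj, hcard] at hle
  have : (Set.Iic ((n - 1) / 3)).ncard = (n - 1) / 3 + 1 := by
    rw [← Finset.coe_Iic, Set.ncard_coe_finset, Nat.card_Iic]
  omega

/-- step function for the middle-range construction -/
def caseF (m : ℕ) : ℕ → ℕ := fun i => if i ≤ m then 2 * i else 2 * m + 3 * (i - m)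

lemma caseF_le {m i : ℕ} (h : i ≤ m) : caseF m i = 2 * i := if_pos h

lemma caseF_gt {m i : ℕ} (h : m < i) : caseF m i = 2 * m + 3 * (i - m) :=
  if_neg (by omega)

lemma caseF_gap {m : ℕ} : ∀ i j, i < j → caseF m i + 2 * (j - i) ≤ caseF m j := by
  intro i j hij
  unfold caseF
  split <;> split <;> omega

lemma case2 {k n : ℕ} (hk : 2 ≤ k) (hlo : 2 * k + 3 ≤ n) (hhi : n ≤ 3 * k) :
    ktrdNum (SimpleGraph.pathGraph n)ᶜ k = k + 2 := by
  have hn0 : 0 < n := by omega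
  obtain ⟨r, hr⟩ : ∃ r, n = 2 * k + 3 + r := ⟨n - (2 * k + 3), by omega⟩
  have hrk : r + 3 ≤ k := by omega
  obtain ⟨m, hm⟩ : ∃ m, m + r = k + 1 := ⟨k + 1 - r, by omega⟩
  set S : Set (Fin n) := {w : Fin n | ∃ i, i < k + 2 ∧ caseF m i = w.val} with hSdef
  have hfn : ∀ i, i < k + 2 → caseF m i < n := by
    intro i hi
    unfold caseF
    split <;> omega
  have hcard : S.ncard = k + 2 := by
    apply ncard_graphSet
    · intro i j hij hj
      have := caseF_gap (m := m) i j hij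
      omega
    · exact hfn
  have hvalid : IsKTRDS (SimpleGraph.pathGraph n)ᶜ k S := by
    rw [ktrds_iff]
    constructor
    · intro v
      have hle2 : (S ∩ pball n v).ncard ≤ 2 := by
        by_contra hgt
        obtain ⟨a, ⟨⟨ia, hia, hfa⟩, hba⟩, b, ⟨⟨ib, hib, hfb⟩, hbb⟩, c, ⟨⟨ic, hic, hfc⟩, hbc⟩,
            hab, hac, hbc'⟩ :=
          (Set.two_lt_ncard (s := S ∩ pball n v) (Set.toFinite _)).1 (by omega)
        have pair : ∀ (x y : Fin n) (ix iy : ℕ), caseF m ix = x.val → caseF m iy = y.val →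
            x ∈ pball n v → y ∈ pball n v → x ≠ y → (ix + 1 = iy ∨ iy + 1 = ix) := by
          intro x y ix iy hfx hfy hbx hby hxy
          have hvne : x.val ≠ y.val := fun h => hxy (Fin.ext h)
          obtain ⟨hx1, hx2⟩ := hbx
          obtain ⟨hy1, hy2⟩ := hby
          rcases lt_trichotomy ix iy with h | h | h
          · have := caseF_gap (m := m) ix iy h
            omega
          · rw [h] at hfx
            omega
          · have := caseF_gap (m := m) iy ix h
            omega
        have p1 := pair a b ia ib hfa hfb hba hbb hab
        have p2 := pair a c ia ic hfa hfc hba hbc hac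
        have p3 := pair b c ib ic hfb hfc hbb hbc hbc'
        -- indices distinct since values distinct
        have d1 : ia ≠ ib := by
          intro h; exact hab (Fin.ext (by rw [← hfa, ← hfb, h]))
        rcases p1 with h | h <;> rcases p2 with h' | h' <;> rcases p3 with h'' | h'' <;> omega
      omega
    · intro v hv
      have hsplit := ncard_split_pball S v
      have hball := pball_ncard_le n v
      have hcompl : Sᶜ.ncard = n - (k + 2) := by rw [ncard_compl_fin, hcard]
      simp only [hSdef, Set.mem_setOf_eq, not_exists, not_and] at hv
      have hvlt := v.isLt
      by_cases hr2 : 2 ≤ r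
      · omega
      · -- r ≤ 1 : if v.val is in the "even zone" and even, contradiction
        have heven : v.val ≤ 2 * m → ¬(2 ∣ v.val) := by
          intro h hd
          exact hv (v.val / 2) (by omega) (by rw [caseF_le (by omega)]; omega)
        by_cases hr1 : r = 1
        · -- exhibit an element of S in the ball
          have hpos : 0 < (S ∩ pball n v).ncard := by
            rw [Set.ncard_pos (Set.toFinite _)]
            by_cases h2m : v.val ≤ 2 * m
            · have hodd := heven h2m
              have hv1 : 1 ≤ v.val := by omega
              exact ⟨⟨v.val - 1, by omega⟩,
                mk_mem_graphSet _ ((v.val - 1) / 2) (by omega)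
                  (by rw [caseF_le (by omega)]; omega),
                mem_pball_of_val _ (by omega) (by omega)⟩
            · rcases (by omega : v.val = 2 * m + 1 ∨ v.val = 2 * m + 2 ∨ v.val = 2 * m + 3)
                with h | h | h
              · exact ⟨⟨2 * m, by omega⟩,
                  mk_mem_graphSet _ m (by omega) (by rw [caseF_le (by omega)]),
                  mem_pball_of_val _ (by omega) (by omega)⟩
              · exact ⟨⟨2 * m + 3, by omega⟩,
                  mk_mem_graphSet _ (m + 1) (by omega) (by rw [caseF_gt (by omega)]; omega),
                  mem_pball_of_val _ (by omega) (by omega)⟩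
              · exact absurd (by rw [caseF_gt (by omega)]; omega)
                  (hv (m + 1) (by omega))
          omega
        · -- r = 0 : the complement trace on the ball is a subsingleton
          have hr0 : r = 0 := by omega
          have hle1 : (Sᶜ ∩ pball n v).ncard ≤ 1 := by
            rw [Set.ncard_le_one (Set.toFinite _)]
            rintro a ⟨haS, ha1, ha2⟩ b ⟨hbS, hb1, hb2⟩
            simp only [hSdef, Set.mem_compl_iff, Set.mem_setOf_eq, not_exists, not_and]
              at haS hbS
            have hodda : ¬(2 ∣ a.val) := by
              intro hd
              exact haS (a.val / 2) (by omega) (by rw [caseF_le (by omega)]; omega)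
            have hoddb : ¬(2 ∣ b.val) := by
              intro hd
              exact hbS (b.val / 2) (by omega) (by rw [caseF_le (by omega)]; omega)
            have hoddv := heven (by omega)
            apply Fin.ext
            omega
          omega
  have hmem : k + 2 ∈
      {m | ∃ S : Set (Fin n), IsKTRDS (SimpleGraph.pathGraph n)ᶜ k S ∧ S.ncard = m} :=
    ⟨S, hvalid, hcard⟩
  unfold ktrdNum
  refine le_antisymm (Nat.sInf_le hmem) (le_csInf ⟨_, hmem⟩ ?_)
  rintro q ⟨T, hT, rfl⟩
  have h1 := lower_k1 hk hn0 hT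
  by_contra hq
  exact sparse_contra hk (by omega) hhi hT (by omega)

theorem stmt_6 (k n : ℕ) (hk : 2 ≤ k) (hn : k + 3 ≤ n) :
    ktrdNum (SimpleGraph.pathGraph n)ᶜ k =
      if n ≤ 2 * k + 2 then n else if n ≤ 3 * k then k + 2 else k + 1 := by
  split_ifs with h1 h2
  · exact case1 hk hn h1
  · exact case2 hk (by omega) h2
  · exact case3 hk (by omega)
end

section
/- For n ≥ 5, the total restrained domination number of the complement of the path P_n equals 2, and for n = 4 it equals 4. -/
open SimpleGraph

/-
Any total dominating set `S` contains some `w` together with a neighbour of `w`, hence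
`γ^r_t ≥ 2`. For `n ≥ 5` the set `{0, 3}` works: every vertex is adjacent to `0` or `3` in the
complement of `P_n`, and each vertex outside it is adjacent to `1` or `4`.
For `n = 4` the complement of `P_4` is the path `2 - 0 - 3 - 1`; in a total restrained dominating
set the support vertex of a leaf must be chosen, and then so must the leaf itself, which forces
all four vertices.
-/

namespace SimpleGraph

variable {V : Type*} {G : SimpleGraph V} {S : Set V}

theorem isKTRDS_one_iff [Finite V] :
    IsKTRDS G 1 S ↔ (∀ v, ∃ w ∈ S, G.Adj v w) ∧ ∀ v ∉ S, ∃ w ∉ S, G.Adj v w := by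
  have one_le_ncard_iff (s : Set V) : 1 ≤ s.ncard ↔ s.Nonempty :=
    Nat.one_le_iff_ne_zero.trans
      ⟨Set.nonempty_of_ncard_ne_zero, fun ⟨_, h⟩ => Set.ncard_ne_zero_of_mem h⟩
  simp only [IsKTRDS, one_le_ncard_iff, Set.Nonempty, Set.mem_inter_iff, mem_neighborSet,
    Set.mem_compl_iff]

theorem IsKTRDS.two_le_ncard [Finite V] [Nonempty V] (h : IsKTRDS G 1 S) : 2 ≤ S.ncard := by
  obtain ⟨hdom, -⟩ := isKTRDS_one_iff.mp h
  obtain ⟨w, hw, -⟩ := hdom (Classical.arbitrary V)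
  obtain ⟨w', hw', hadj⟩ := hdom w
  exact (Set.one_lt_ncard S.toFinite).mpr ⟨w, hw, w', hw', hadj.ne⟩

theorem IsKTRDS.mem_of_neighborSet_eq_singleton [Finite V] {u v : V} (h : IsKTRDS G 1 S)
    (hv : G.neighborSet v = {u}) : u ∈ S ∧ v ∈ S := by
  obtain ⟨hdom, hres⟩ := isKTRDS_one_iff.mp h
  have hadj : ∀ {w}, G.Adj v w → w = u := fun {w} hw => by
    simpa [← mem_neighborSet, hv] using hw
  obtain ⟨w, hwS, hvw⟩ := hdom v
  have hu : u ∈ S := hadj hvw ▸ hwS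
  refine ⟨hu, by_contra fun hvS => ?_⟩
  obtain ⟨w, hwS, hvw⟩ := hres v hvS
  exact hwS (hadj hvw ▸ hu)

theorem ktrdNum_eq_of_isKTRDS {k : ℕ} (hS : IsKTRDS G k S)
    (hmin : ∀ T, IsKTRDS G k T → S.ncard ≤ T.ncard) : ktrdNum G k = S.ncard :=
  le_antisymm (Nat.sInf_le ⟨S, hS, rfl⟩) (le_csInf ⟨_, S, hS, rfl⟩ fun _ ⟨T, hT, hm⟩ =>
    hm ▸ hmin T hT)

end SimpleGraph

theorem compl_pathGraph_adj {n : ℕ} {u v : Fin n} :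
    (pathGraph n)ᶜ.Adj u v ↔ u.val + 2 ≤ v.val ∨ v.val + 2 ≤ u.val := by
  simp only [compl_adj, pathGraph_adj, ne_eq, Fin.ext_iff]
  omega

theorem isKTRDS_compl_pathGraph_pair {n : ℕ} (hn : 5 ≤ n) :
    IsKTRDS (pathGraph n)ᶜ 1 {⟨0, by omega⟩, ⟨3, by omega⟩} := by
  refine isKTRDS_one_iff.mpr ⟨fun v => ?_, fun v hv => ?_⟩
  · by_cases hv2 : 2 ≤ v.val
    · exact ⟨⟨0, by omega⟩, by simp, compl_pathGraph_adj.mpr (by simp; omega)⟩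
    · exact ⟨⟨3, by omega⟩, by simp, compl_pathGraph_adj.mpr (by simp; omega)⟩
  · simp only [Set.mem_insert_iff, Set.mem_singleton_iff, not_or, Fin.ext_iff] at hv
    by_cases hv2 : v.val ≤ 2
    · refine ⟨⟨4, by omega⟩, by simp [Fin.ext_iff], compl_pathGraph_adj.mpr ?_⟩
      simp only; omega
    · refine ⟨⟨1, by omega⟩, by simp [Fin.ext_iff], compl_pathGraph_adj.mpr ?_⟩
      simp only; omega

theorem ktrdNum_compl_pathGraph_of_five_le {n : ℕ} (hn : 5 ≤ n) :
    ktrdNum (pathGraph n)ᶜ 1 = 2 := by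
  have : Nonempty (Fin n) := ⟨⟨0, by omega⟩⟩
  have hS := isKTRDS_compl_pathGraph_pair hn
  have hcard : ({⟨0, by omega⟩, ⟨3, by omega⟩} : Set (Fin n)).ncard = 2 :=
    Set.ncard_pair (by simp [Fin.ext_iff])
  rw [ktrdNum_eq_of_isKTRDS hS fun T hT => hcard ▸ hT.two_le_ncard, hcard]

theorem ktrdNum_compl_pathGraph_four : ktrdNum (pathGraph 4)ᶜ 1 = 4 := by
  have huniv : IsKTRDS (pathGraph 4)ᶜ 1 Set.univ := by
    refine isKTRDS_one_iff.mpr ⟨fun v => ⟨if v.val ≤ 1 then 3 else 0, trivial, ?_⟩,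
      fun v hv => absurd trivial hv⟩
    rw [compl_pathGraph_adj]
    fin_cases v <;> decide
  have hforced : ∀ T, IsKTRDS (pathGraph 4)ᶜ 1 T → T = Set.univ := fun T hT => by
    have nbr_two : (pathGraph 4)ᶜ.neighborSet 2 = {0} := by
      ext w
      rw [mem_neighborSet, compl_pathGraph_adj, Set.mem_singleton_iff]
      fin_cases w <;> decide
    have nbr_one : (pathGraph 4)ᶜ.neighborSet 1 = {3} := by
      ext w
      rw [mem_neighborSet, compl_pathGraph_adj, Set.mem_singleton_iff]
      fin_cases w <;> decide
    obtain ⟨h0, h2⟩ := hT.mem_of_neighborSet_eq_singleton nbr_two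
    obtain ⟨h3, h1⟩ := hT.mem_of_neighborSet_eq_singleton nbr_one
    ext v; fin_cases v <;> simpa
  rw [ktrdNum_eq_of_isKTRDS huniv fun T hT => by rw [hforced T hT], Set.ncard_univ,
    Nat.card_fin]

theorem stmt_7 (n : ℕ) (hn : 4 ≤ n) :
    ktrdNum (SimpleGraph.pathGraph n)ᶜ 1 = if n = 4 then 4 else 2 := by
  split_ifs with h4
  · subst h4
    exact ktrdNum_compl_pathGraph_four
  · exact ktrdNum_compl_pathGraph_of_five_le (by omega)
end

section
/- For n ≥ 4, the total restrained domination number of the cycle C_n equals 2⌈n/4⌉−1 if n ≡ 1 (mod 4), equals 2⌈n/4⌉+1 if n ≡ 3 (mod 4), and equals 2⌈n/4⌉ otherwise. -/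
open SimpleGraph

/-!
Let `S` be a total restrained dominating set of `C_n`. A vertex outside `S` needs a neighbour in
`S` and one outside `S`, so `Sᶜ` splits into pairs of consecutive vertices and `|Sᶜ|` is even.
If `v ∉ S`, then `v + 1` can only be dominated by `v + 2`, so `v ↦ v + 2` injects `Sᶜ` into `S`
and `|Sᶜ| ≤ n / 2`. Together, `|Sᶜ| ≤ 2 ⌊n / 4⌋`, and removing the pairs `{4q + 2, 4q + 3}`,
`q < ⌊n / 4⌋`, attains this bound: `γ^r_t(C_n) = n - 2 ⌊n / 4⌋`.
-/

lemma one_le_ncard_inter_pair_iff {α : Type*} {T : Set α} {a b : α} :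
    1 ≤ (T ∩ {a, b}).ncard ↔ a ∈ T ∨ b ∈ T := by
  rw [Nat.one_le_iff_ne_zero, ← Nat.pos_iff_ne_zero,
    Set.ncard_pos ((Set.toFinite {a, b}).subset Set.inter_subset_right)]
  simp [Set.Nonempty, and_or_left, exists_or]

lemma isKTRDS_cycleGraph_one_iff {n : ℕ} {S : Set (Fin (n + 2))} :
    IsKTRDS (cycleGraph (n + 2)) 1 S ↔
      (∀ v, v - 1 ∈ S ∨ v + 1 ∈ S) ∧ (∀ v, v ∉ S → v - 1 ∉ S ∨ v + 1 ∉ S) := by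
  simp only [IsKTRDS, cycleGraph_neighborSet, one_le_ncard_inter_pair_iff, Set.mem_compl_iff,
    ← not_and_or]

section AddGroup

/- The hypotheses `hdom` and `hres` below say that `S` is a total restrained dominating set of the
Cayley graph `v ~ v ± a`; for `a = 1` in `Fin n` this is the cycle. -/

variable {G : Type*} [AddGroup G] {a : G} {S : Set G}

lemma add_add_mem_of_notMem (hdom : ∀ v, v - a ∈ S ∨ v + a ∈ S) {v : G} (hv : v ∉ S) :
    v + a + a ∈ S :=
  (hdom (v + a)).resolve_left (by rwa [add_sub_cancel_right])

variable [Finite G]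

lemma two_mul_ncard_compl_le (hdom : ∀ v, v - a ∈ S ∨ v + a ∈ S) :
    2 * Sᶜ.ncard ≤ Nat.card G := by
  have hinj : Sᶜ.ncard ≤ S.ncard :=
    Set.ncard_le_ncard_of_injOn (fun v => v + a + a) (fun _ hv => add_add_mem_of_notMem hdom hv)
      (fun _ _ _ _ h => add_right_cancel (add_right_cancel h))
  have := S.ncard_add_ncard_compl
  omega

lemma even_ncard_compl (hdom : ∀ v, v - a ∈ S ∨ v + a ∈ S)
    (hres : ∀ v, v ∉ S → v - a ∉ S ∨ v + a ∉ S) : Even Sᶜ.ncard := by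
  set L := {v | v ∉ S ∧ v + a ∉ S}
  have hcover : Sᶜ = L ∪ (· + a) '' L := by
    ext v
    refine ⟨fun hv => ?_, ?_⟩
    · rcases hres v hv with h | h
      · exact Or.inr ⟨v - a, ⟨h, by rwa [sub_add_cancel]⟩, sub_add_cancel v a⟩
      · exact Or.inl ⟨hv, h⟩
    · rintro (hv | ⟨w, hw, rfl⟩)
      exacts [hv.1, hw.2]
  have hdisj : Disjoint L ((· + a) '' L) := by
    rw [Set.disjoint_left]
    rintro _ ⟨_, hv⟩ ⟨w, hw, rfl⟩
    exact hv (add_add_mem_of_notMem hdom hw.1)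
  rw [hcover, Set.ncard_union_eq hdisj, Set.ncard_image_of_injective _ (add_left_injective a)]
  exact ⟨_, rfl⟩

lemma card_sub_two_mul_div_four_le_ncard (hdom : ∀ v, v - a ∈ S ∨ v + a ∈ S)
    (hres : ∀ v, v ∉ S → v - a ∉ S ∨ v + a ∉ S) :
    Nat.card G - 2 * (Nat.card G / 4) ≤ S.ncard := by
  obtain ⟨k, hk⟩ := even_ncard_compl hdom hres
  have := two_mul_ncard_compl_le hdom
  have := S.ncard_add_ncard_compl
  omega

end AddGroup

lemma count_two_le_mod_four (q : ℕ) : Nat.count (fun k => 2 ≤ k % 4) (4 * q) = 2 * q := by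
  induction q with
  | zero => simp
  | succ q ih =>
    have hblock : Nat.count (fun k => 2 ≤ (4 * q + k) % 4) 4 = 2 := by
      simp only [Nat.mul_add_mod_self_left]
      decide
    rw [mul_add, Nat.count_add, ih, mul_one, hblock, mul_add_one]

def cycleTRDSet (N : ℕ) : Set (Fin N) := {i | i.val % 4 < 2 ∨ 4 * (N / 4) ≤ i.val}

lemma ncard_cycleTRDSet (N : ℕ) : (cycleTRDSet N).ncard = N - 2 * (N / 4) := by
  have hcompl : Fin.val '' (cycleTRDSet N)ᶜ =
      ({k ∈ Finset.range (4 * (N / 4)) | 2 ≤ k % 4} : Finset ℕ) := by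
    ext k
    simp only [cycleTRDSet, Set.mem_image, Set.mem_compl_iff, Set.mem_ofPred_eq, Finset.coe_filter,
      Finset.mem_range]
    exact ⟨by rintro ⟨i, hi, rfl⟩; omega, fun hk => ⟨⟨k, by omega⟩, by simp only; omega, rfl⟩⟩
  have hcard : (cycleTRDSet N)ᶜ.ncard = 2 * (N / 4) := by
    rw [← Set.ncard_image_of_injective _ Fin.val_injective, hcompl, Set.ncard_coe_finset,
      ← Nat.count_eq_card_filter_range, count_two_le_mod_four]
  have := (cycleTRDSet N).ncard_add_ncard_compl
  rw [Nat.card_fin] at this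
  omega

lemma cycleTRDSet_dom (n : ℕ) (v : Fin (n + 2)) :
    v - 1 ∈ cycleTRDSet (n + 2) ∨ v + 1 ∈ cycleTRDSet (n + 2) := by
  have := v.isLt
  simp only [cycleTRDSet, Set.mem_ofPred_eq, Fin.val_add_one, Fin.coe_sub_one, Fin.ext_iff,
    Fin.val_last, Fin.val_zero]
  split_ifs <;> omega

lemma cycleTRDSet_res (n : ℕ) (v : Fin (n + 2)) (hv : v ∉ cycleTRDSet (n + 2)) :
    v - 1 ∉ cycleTRDSet (n + 2) ∨ v + 1 ∉ cycleTRDSet (n + 2) := by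
  have := v.isLt
  simp only [cycleTRDSet, Set.mem_ofPred_eq, Fin.val_add_one, Fin.coe_sub_one, Fin.ext_iff,
    Fin.val_last, Fin.val_zero] at hv ⊢
  split_ifs <;> omega

theorem ktrdNum_cycleGraph_one (n : ℕ) :
    ktrdNum (cycleGraph (n + 2)) 1 = n + 2 - 2 * ((n + 2) / 4) := by
  refine IsLeast.csInf_eq ⟨⟨cycleTRDSet (n + 2), isKTRDS_cycleGraph_one_iff.2
    ⟨cycleTRDSet_dom n, cycleTRDSet_res n⟩, ncard_cycleTRDSet _⟩, ?_⟩
  rintro _ ⟨S, hS, rfl⟩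
  obtain ⟨hdom, hres⟩ := isKTRDS_cycleGraph_one_iff.1 hS
  simpa using card_sub_two_mul_div_four_le_ncard hdom hres

theorem stmt_9 (n : ℕ) (hn : 4 ≤ n) :
    ktrdNum (SimpleGraph.cycleGraph n) 1 =
      if n % 4 = 1 then 2 * ((n + 3) / 4) - 1
      else if n % 4 = 3 then 2 * ((n + 3) / 4) + 1
      else 2 * ((n + 3) / 4) := by
  obtain ⟨m, rfl⟩ : ∃ m, n = m + 2 := ⟨n - 2, by omega⟩
  rw [ktrdNum_cycleGraph_one]
  split_ifs <;> omega
end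

section
/- Let G = K_{n,m} be the complete bipartite graph with n ≥ m ≥ k ≥ 1 and minimum degree at least k. Then γ^r_{×k,t}(G) = 2k if n ≥ m ≥ 2k, and γ^r_{×k,t}(G) = n+m otherwise. -/
open SimpleGraph

lemma nbl {α β : Type*} (a : α) :
    (completeBipartiteGraph α β).neighborSet (Sum.inl a) = Set.range Sum.inr := by
  ext v; cases v <;> simp [neighborSet]

lemma nbr {α β : Type*} (b : β) :
    (completeBipartiteGraph α β).neighborSet (Sum.inr b) = Set.range Sum.inl := by
  ext v; cases v <;> simp [neighborSet]

lemma inter_range_inr {α β : Type*} (S : Set (α ⊕ β)) :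
    (S ∩ Set.range Sum.inr).ncard = (Sum.inr ⁻¹' S : Set β).ncard := by
  have : S ∩ Set.range Sum.inr = Sum.inr '' (Sum.inr ⁻¹' S) := by
    ext v; cases v <;> simp
  rw [this, Set.ncard_image_of_injective _ Sum.inr_injective]

lemma inter_range_inl {α β : Type*} (S : Set (α ⊕ β)) :
    (S ∩ Set.range Sum.inl).ncard = (Sum.inl ⁻¹' S : Set α).ncard := by
  have : S ∩ Set.range Sum.inl = Sum.inl '' (Sum.inl ⁻¹' S) := by
    ext v; cases v <;> simp
  rw [this, Set.ncard_image_of_injective _ Sum.inl_injective]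

lemma ncard_sum {α β : Type*} [Fintype α] [Fintype β] (S : Set (α ⊕ β)) :
    S.ncard = (Sum.inl ⁻¹' S : Set α).ncard + (Sum.inr ⁻¹' S : Set β).ncard := by
  have h : S = Sum.inl '' (Sum.inl ⁻¹' S) ∪ Sum.inr '' (Sum.inr ⁻¹' S) := by
    ext v; cases v <;> simp
  conv_lhs => rw [h]
  rw [Set.ncard_union_eq (by
    rw [Set.disjoint_left]; rintro _ ⟨a, _, rfl⟩ ⟨b, _, h⟩; exact Sum.inl_ne_inr h.symm)
    (Set.toFinite _) (Set.toFinite _),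
    Set.ncard_image_of_injective _ Sum.inl_injective,
    Set.ncard_image_of_injective _ Sum.inr_injective]

lemma ncard_range_castLE {k p : ℕ} (h : k ≤ p) :
    (Set.range (Fin.castLE h)).ncard = k := by
  rw [← Set.image_univ, Set.ncard_image_of_injective _ (Fin.castLE_injective h),
    Set.ncard_univ]
  simp

lemma ncard_compl_range_castLE {k p : ℕ} (h : k ≤ p) :
    ((Set.range (Fin.castLE h))ᶜ).ncard = p - k := by
  have h2 := Set.ncard_add_ncard_compl (Set.range (Fin.castLE h))
  rw [ncard_range_castLE h] at h2
  simp only [Nat.card_eq_fintype_card, Fintype.card_fin] at h2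
  omega

theorem stmt_11 (n m k : ℕ) (hk : 1 ≤ k) (hmk : k ≤ m) (hnm : m ≤ n) :
    ktrdNum (completeBipartiteGraph (Fin n) (Fin m)) k =
      if 2 * k ≤ m then 2 * k else n + m := by
  have hkn : k ≤ n := hmk.trans hnm
  have a0 : Fin n := ⟨0, by omega⟩
  have b0 : Fin m := ⟨0, by omega⟩
  by_cases hm : 2 * k ≤ m
  · rw [if_pos hm]
    set S : Set (Fin n ⊕ Fin m) :=
      Set.range (Sum.inl ∘ Fin.castLE hkn) ∪ Set.range (Sum.inr ∘ Fin.castLE hmk) with hSdef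
    have hpl : Sum.inl ⁻¹' S = Set.range (Fin.castLE hkn) := by
      ext a
      simp only [hSdef, Set.mem_preimage, Set.mem_union, Set.mem_range, Function.comp_apply,
        Sum.inl.injEq, reduceCtorEq, exists_false, or_false]
    have hpr : Sum.inr ⁻¹' S = Set.range (Fin.castLE hmk) := by
      ext b
      simp only [hSdef, Set.mem_preimage, Set.mem_union, Set.mem_range, Function.comp_apply,
        Sum.inr.injEq, reduceCtorEq, exists_false, false_or]
    have hS : IsKTRDS (completeBipartiteGraph (Fin n) (Fin m)) k S := by
      constructor
      · intro v
        cases v with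
        | inl a => rw [nbl, inter_range_inr, hpr, ncard_range_castLE]
        | inr b => rw [nbr, inter_range_inl, hpl, ncard_range_castLE]
      · intro v _
        cases v with
        | inl a =>
          rw [nbl, inter_range_inr, Set.preimage_compl, hpr, ncard_compl_range_castLE]
          omega
        | inr b =>
          rw [nbr, inter_range_inl, Set.preimage_compl, hpl, ncard_compl_range_castLE]
          omega
    have hcard : S.ncard = 2 * k := by
      rw [ncard_sum, hpl, hpr, ncard_range_castLE, ncard_range_castLE]; ring
    apply le_antisymm
    · exact Nat.sInf_le ⟨S, hS, hcard⟩
    · refine le_csInf ⟨2 * k, S, hS, hcard⟩ ?_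
      rintro x ⟨T, ⟨h1, _⟩, rfl⟩
      have hL := h1 (Sum.inr b0)
      rw [nbr, inter_range_inl] at hL
      have hR := h1 (Sum.inl a0)
      rw [nbl, inter_range_inr] at hR
      rw [ncard_sum]
      omega
  · rw [if_neg hm]
    have huniv : IsKTRDS (completeBipartiteGraph (Fin n) (Fin m)) k
        (Set.univ : Set (Fin n ⊕ Fin m)) := by
      constructor
      · intro v
        cases v with
        | inl a =>
          rw [nbl, Set.univ_inter, ← Set.image_univ,
            Set.ncard_image_of_injective _ Sum.inr_injective, Set.ncard_univ]
          simpa using hmk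
        | inr b =>
          rw [nbr, Set.univ_inter, ← Set.image_univ,
            Set.ncard_image_of_injective _ Sum.inl_injective, Set.ncard_univ]
          simpa using hkn
      · intro v hv; exact absurd (Set.mem_univ v) hv
    have hcard : (Set.univ : Set (Fin n ⊕ Fin m)).ncard = n + m := by
      rw [Set.ncard_univ]; simp
    apply le_antisymm
    · exact Nat.sInf_le ⟨Set.univ, huniv, hcard⟩
    · refine le_csInf ⟨n + m, Set.univ, huniv, hcard⟩ ?_
      rintro x ⟨T, ⟨h1, h2⟩, rfl⟩
      have hL : ∀ a : Fin n, Sum.inl a ∈ T := by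
        intro a
        by_contra ha
        have c1 := h1 (Sum.inl a)
        rw [nbl, inter_range_inr] at c1
        have c2 := h2 (Sum.inl a) ha
        rw [nbl, inter_range_inr, Set.preimage_compl] at c2
        have c3 := Set.ncard_add_ncard_compl (Sum.inr ⁻¹' T : Set (Fin m))
        simp only [Nat.card_eq_fintype_card, Fintype.card_fin] at c3
        omega
      have hR : ∀ b : Fin m, Sum.inr b ∈ T := by
        intro b
        by_contra hb
        have c2 := h2 (Sum.inr b) hb
        rw [nbr, inter_range_inl, Set.preimage_compl] at c2
        have : (Sum.inl ⁻¹' T : Set (Fin n))ᶜ = ∅ := by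
          ext a; simp [hL a]
        rw [this, Set.ncard_empty] at c2
        omega
      have hT : T = Set.univ := by
        ext v
        cases v with
        | inl a => simp [hL a]
        | inr b => simp [hR b]
      rw [hT, hcard]
end

section
/- If G is a graph of order n with m edges and minimum degree at least k, then γ^r_{×k,t}(G) ≥ 3n/2 − m/k. -/
open SimpleGraph

/-!
Take a minimum `k`-tuple total restrained dominating set `S` and split the degree sum
`2m = ∑ deg v` according to whether a neighbour lies in `S` or not. Every vertex has at least `k`
neighbours in `S`; every vertex outside `S` has at least `k` neighbours outside `S`; and the edges
between `S` and its complement, counted from the `S` side, are at least `k` per vertex outside `S`.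
Hence `2m ≥ k (n + 2 (n - |S|))`, which rearranges to `|S| ≥ 3n/2 - m/k`.
-/

open Finset

namespace SimpleGraph

variable {V : Type*} (G : SimpleGraph V)

lemma exists_isKTRDS_ncard_eq_ktrdNum {k : ℕ} (hδ : ∀ v : V, k ≤ (G.neighborSet v).ncard) :
    ∃ S : Set V, IsKTRDS G k S ∧ S.ncard = ktrdNum G k := by
  have hne : {m | ∃ S : Set V, IsKTRDS G k S ∧ S.ncard = m}.Nonempty :=
    ⟨_, Set.univ, ⟨fun v => by simpa using hδ v, fun v hv => absurd (Set.mem_univ v) hv⟩, rfl⟩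
  exact Nat.sInf_mem hne

variable [DecidableRel G.Adj]

lemma ncard_inter_neighborSet (s : Finset V) (v : V) :
    ((s : Set V) ∩ G.neighborSet v).ncard = #{w ∈ s | G.Adj v w} := by
  rw [← Set.ncard_coe_finset, coe_filter]
  rfl

lemma sum_card_adj_comm (s t : Finset V) :
    ∑ v ∈ s, #{w ∈ t | G.Adj v w} = ∑ v ∈ t, #{w ∈ s | G.Adj v w} := by
  simpa only [bipartiteAbove, bipartiteBelow, G.adj_comm] using
    sum_card_bipartiteAbove_eq_sum_card_bipartiteBelow (s := s) (t := t) (r := G.Adj)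

variable [Fintype V]

lemma degree_eq_card_adj_add_card_adj_compl [DecidableEq V] (s : Finset V) (v : V) :
    G.degree v = #{w ∈ s | G.Adj v w} + #{w ∈ sᶜ | G.Adj v w} := by
  rw [← card_union_of_disjoint (disjoint_filter_filter disjoint_compl_right), ← filter_union,
    union_compl, ← neighborFinset_eq_filter, card_neighborFinset_eq_degree]

lemma mul_card_add_two_mul_card_compl_le_sum_degrees [DecidableEq V] {k : ℕ} {s : Finset V}
    (hs : IsKTRDS G k s) :
    k * (Fintype.card V + 2 * #sᶜ) ≤ ∑ v, G.degree v := by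
  have hin : ∀ v, k ≤ #{w ∈ s | G.Adj v w} := fun v => G.ncard_inter_neighborSet s v ▸ hs.1 v
  have hout : ∀ v ∈ sᶜ, k ≤ #{w ∈ sᶜ | G.Adj v w} := fun v hv => by
    simpa only [← coe_compl, ncard_inter_neighborSet] using hs.2 v (by simpa using hv)
  have hcross : k * #sᶜ ≤ ∑ v ∈ s, #{w ∈ sᶜ | G.Adj v w} := by
    rw [sum_card_adj_comm, mul_comm, ← smul_eq_mul, ← sum_const]
    exact sum_le_sum fun v _ => hin v
  have hinside : k * #sᶜ ≤ ∑ v ∈ sᶜ, #{w ∈ sᶜ | G.Adj v w} := by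
    rw [mul_comm, ← smul_eq_mul, ← sum_const]
    exact sum_le_sum hout
  have hall : k * Fintype.card V ≤ ∑ v, #{w ∈ s | G.Adj v w} := by
    rw [mul_comm, ← card_univ, ← smul_eq_mul, ← sum_const]
    exact sum_le_sum fun v _ => hin v
  calc k * (Fintype.card V + 2 * #sᶜ)
      ≤ ∑ v, #{w ∈ s | G.Adj v w} + (∑ v ∈ s, #{w ∈ sᶜ | G.Adj v w} +
          ∑ v ∈ sᶜ, #{w ∈ sᶜ | G.Adj v w}) := by linarith
    _ = ∑ v, G.degree v := by
      rw [sum_add_sum_compl, ← sum_add_distrib]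
      exact sum_congr rfl fun v _ => (G.degree_eq_card_adj_add_card_adj_compl s v).symm

end SimpleGraph

open SimpleGraph

theorem stmt_13 {V : Type*} [Fintype V] (G : SimpleGraph V) (k : ℕ) (hk : 1 ≤ k)
    (hδ : ∀ v : V, k ≤ (G.neighborSet v).ncard) :
    3 * (Fintype.card V : ℝ) / 2 - (G.edgeSet.ncard : ℝ) / (k : ℝ) ≤
      (ktrdNum G k : ℝ) := by
  classical
  obtain ⟨S, hS, hcard⟩ := G.exists_isKTRDS_ncard_eq_ktrdNum hδ
  rw [← Set.coe_toFinset S] at hS hcard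
  set s := S.toFinset
  rw [← hcard, Set.ncard_coe_finset, ← coe_edgeFinset, Set.ncard_coe_finset]
  have hbound := G.mul_card_add_two_mul_card_compl_le_sum_degrees hS
  rw [sum_degrees_eq_twice_card_edges] at hbound
  have hboundR : (k : ℝ) * (Fintype.card V + 2 * #sᶜ) ≤ 2 * #G.edgeFinset := by
    exact_mod_cast hbound
  have hsplit : (#s : ℝ) + #sᶜ = Fintype.card V := by exact_mod_cast card_add_card_compl s
  have hkR : (0 : ℝ) < k := by exact_mod_cast hk
  have hcompl : (Fintype.card V : ℝ) / 2 + #sᶜ ≤ #G.edgeFinset / k := by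
    rw [le_div_iff₀ hkR]
    linarith
  linarith
end

section
/- For every graph G with minimum degree at least k ≥ 1, the k-tuple total restrained domatic number equals the k-tuple total domatic number: d^r_{×k,t}(G) = d_{×k,t}(G). -/
open SimpleGraph

theorem stmt_17 {V : Type*} (G : SimpleGraph V) (k : ℕ) (hk : 1 ≤ k)
    (hδ : ∀ v : V, k ≤ (G.neighborSet v).ncard) :
    ktrdDomatic G k = ktDomatic G k := by
  unfold ktrdDomatic ktDomatic
  congr 1
  ext d
  constructor
  · rintro ⟨f, hf, hpart⟩
    exact ⟨f, fun i => (hf i).1, hpart⟩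
  · rintro ⟨f, hf, hpart⟩
    refine ⟨f, fun i => ⟨hf i, fun v hv => ?_⟩, hpart⟩
    obtain ⟨j, hj, -⟩ := hpart v
    have hNfin : (G.neighborSet v).Finite := by
      rw [← Set.not_infinite]; intro h
      have h0 : (G.neighborSet v).ncard = 0 :=
        Set.Infinite.ncard h
      have := hδ v
      omega
    have hsub : f j ∩ G.neighborSet v ⊆ (f i)ᶜ ∩ G.neighborSet v := by
      rintro x ⟨hxj, hxN⟩
      refine ⟨fun hxi => ?_, hxN⟩
      have : j = i := ExistsUnique.unique (hpart x) hxj hxi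
      exact hv (this ▸ hj)
    calc k ≤ (f j ∩ G.neighborSet v).ncard := hf j v
      _ ≤ ((f i)ᶜ ∩ G.neighborSet v).ncard :=
        Set.ncard_le_ncard hsub (hNfin.subset Set.inter_subset_right)
end
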